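/- arXiv:1702.07553 — 4 statements merged into one kernel-verified Lean document; each statement's English description precedes it below -/
import Mathlib

section
/- Let N ≥ 1 and k ≥ 2 be integers with N > k - 2, set d = N + k, and let p be a prime with p ≠ d and p ∤ d and p ≢ 1 (mod d). If (N+1) does not divide ⌊p(N+1)/d⌋, then ⌈⌊p(N+1)/d⌋/(N+1)⌉ ≥ p/d, i.e. d·⌈⌊p(N+1)/d⌋/(N+1)⌉ ≥ p. -/
theorem stmt1 (N k d p : ℕ) (hN : 1 ≤ N) (hk : 2 ≤ k) (hNk : k - 2 < N)
    (hd : d = N + k) (hp : p.Prime) (hpd : p ≠ d) (hdvd : ¬ p ∣ d)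
    (hmod : ¬ p ≡ 1 [MOD d]) (hndvd : ¬ (N + 1) ∣ (p * (N + 1) / d)) :
    ((p : ℚ) / d ≤ ⌈((p * (N + 1) / d : ℕ) : ℚ) / (N + 1)⌉) ∧
    (p : ℤ) ≤ (d : ℤ) * ⌈((p * (N + 1) / d : ℕ) : ℚ) / (N + 1)⌉ := by
  have hdpos : 0 < d := by omega
  set m : ℕ := p * (N + 1) / d with hm
  set c : ℤ := ⌈((m : ℕ) : ℚ) / (N + 1)⌉ with hc
  have hr : m % (N + 1) ≠ 0 := fun h => hndvd (Nat.dvd_of_mod_eq_zero h)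
  have hmodlt : m % (N + 1) < N + 1 := Nat.mod_lt _ (by omega)
  have hdm : (N + 1) * (m / (N + 1)) + m % (N + 1) = m := Nat.div_add_mod m (N + 1)
  -- c ≥ m/(N+1) + 1
  have hq : ((m / (N + 1) : ℕ) : ℤ) < c := by
    rw [hc, Int.lt_ceil]
    rw [lt_div_iff₀ (by positivity)]
    have h3 : (m / (N + 1)) * (N + 1) < m := by rw [mul_comm]; omega
    push_cast
    exact_mod_cast h3
  have hq1 : ((m / (N + 1) : ℕ) : ℤ) + 1 ≤ c := hq
  -- (N+1)*c ≥ m + 1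
  have hA : ((N : ℤ) + 1) * c ≥ (m : ℤ) + 1 := by
    have := mul_le_mul_of_nonneg_left hq1 (by positivity : (0:ℤ) ≤ (N : ℤ) + 1)
    have hdm' : ((N : ℤ) + 1) * ((m / (N + 1) : ℕ) : ℤ) + ((m % (N + 1) : ℕ) : ℤ) = (m : ℤ) := by
      exact_mod_cast hdm
    have hmodlt' : ((m % (N + 1) : ℕ) : ℤ) < (N : ℤ) + 1 := by exact_mod_cast hmodlt
    linarith
  -- d * m ≥ p*(N+1) - d + 1
  have hdm2 : d * m + (p * (N + 1)) % d = p * (N + 1) := Nat.div_add_mod _ d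
  have hmodd : (p * (N + 1)) % d < d := Nat.mod_lt _ hdpos
  have hB : (d : ℤ) * (m : ℤ) ≥ (p : ℤ) * ((N : ℤ) + 1) - (d : ℤ) + 1 := by
    have h1 : (d : ℤ) * (m : ℤ) + ((p * (N + 1)) % d : ℕ) = (p : ℤ) * ((N : ℤ) + 1) := by
      exact_mod_cast hdm2
    have h2 : (((p * (N + 1)) % d : ℕ) : ℤ) < (d : ℤ) := by exact_mod_cast hmodd
    linarith
  have key : (p : ℤ) ≤ (d : ℤ) * c := by
    by_contra h
    push_neg at h
    have hd' : (0:ℤ) < d := by exact_mod_cast hdpos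
    nlinarith [mul_le_mul_of_nonneg_left hA (le_of_lt hd'),
      mul_le_mul_of_nonneg_left (Int.lt_iff_add_one_le.mp h) (by positivity : (0:ℤ) ≤ (N : ℤ) + 1)]
  refine ⟨?_, key⟩
  rw [div_le_iff₀ (by exact_mod_cast hdpos)]
  have : (p : ℚ) ≤ (d : ℚ) * (c : ℚ) := by exact_mod_cast key
  linarith
end

section
/- Let N ≥ 1 and k ≥ 2 be integers with k < N + 2, set d = N + k, and let p be a prime with p ∤ d and p ≢ 1 (mod d). Then (N+1) does not divide ⌊p(N+1)/d⌋. -/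
theorem stmt2 (N k d p : ℕ) (hN : 1 ≤ N) (hk : 2 ≤ k) (hkN : k < N + 2)
    (hd : d = N + k) (hp : p.Prime) (hdvd : ¬ p ∣ d) (hmod : ¬ p ≡ 1 [MOD d]) :
    ¬ (N + 1) ∣ (p * (N + 1) / d) := by
  have hd3 : 3 ≤ d := by omega
  set r := p % d with hrdef
  have hrd : r < d := Nat.mod_lt _ (by omega)
  have hr0 : r ≠ 0 := by
    intro h
    have hdp : d ∣ p := Nat.dvd_of_mod_eq_zero h
    rcases hp.eq_one_or_self_of_dvd d hdp with h1 | h1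
    · omega
    · exact hdvd (h1 ▸ dvd_refl d)
  have hr1 : r ≠ 1 := by
    intro h
    apply hmod
    show p % d = 1 % d
    have h1 : 1 % d = 1 := Nat.one_mod_eq_one.mpr (by omega)
    omega
  have hr2 : 2 ≤ r := by omega
  have hsplit : p * (N + 1) = r * (N + 1) + (p / d * (N + 1)) * d := by
    conv_lhs => rw [← Nat.div_add_mod p d]
    ring
  rw [hsplit, Nat.add_mul_div_right _ _ (by omega : 0 < d)]
  set t := r * (N + 1) / d with htdef
  have ht1 : 1 ≤ t := by
    rw [htdef, Nat.le_div_iff_mul_le (by omega : 0 < d)]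
    have : 2 * (N + 1) ≤ r * (N + 1) := Nat.mul_le_mul_right _ hr2
    omega
  have ht2 : t < N + 1 := by
    rw [htdef, Nat.div_lt_iff_lt_mul (by omega : 0 < d)]
    calc r * (N + 1) < d * (N + 1) := by
          exact Nat.mul_lt_mul_of_lt_of_le hrd (le_refl _) (by omega)
      _ = (N + 1) * d := by ring
  intro h
  have : (N + 1) ∣ t := by
    exact (Nat.dvd_add_right (dvd_mul_left (N + 1) (p / d))).mp
      (by rw [add_comm (p / d * (N + 1)) t]; exact h)
  have := Nat.le_of_dvd (by omega) this
  omega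
end

section
/- Let N ≥ 1 and k ≥ 2 be integers with N ≥ 2(k-1), set d = N + k, and let i = (i_0,...,i_N), j = (j_0,...,j_N) be tuples of positive integers each summing to d with i ≠ j. Then for every m ≥ 1, the coefficient of the monomial x_0^{m j_0 - i_0} ⋯ x_N^{m j_N - i_N} in (x_0^d + x_1^d + ⋯ + x_N^d)^{m-1} (over ℤ) is zero. -/
/-!
By the multinomial theorem every monomial of `(∑ n, X n ^ d) ^ (m - 1)` has exponents
`d * β n` with `∑ n, β n = m - 1`. If `m * j n - i n = d * β n` for all `n`, comparing total
degrees shows that none of these truncated subtractions is truncated. Positive tuples of length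
`N + 1` and sum `N + k` have at most `k - 1` entries `≥ 2`, so as `2 * (k - 1) ≤ N` there is
a position `s` with `i s = j s = 1`; there `m - 1 = d * β s`, so `m ≡ 1 [MOD d]`, whence
`i n ≡ m * j n ≡ j n [MOD d]` for every `n`, and `i = j` because all entries lie in `[1, d]`.
-/

open Finset MvPolynomial

theorem MvPolynomial.exists_eq_mul_of_coeff_sum_X_pow_pow_ne_zero {σ R : Type*} [Fintype σ]
    [DecidableEq σ] [CommSemiring R] {d p : ℕ} {μ : σ →₀ ℕ}
    (h : coeff μ ((∑ n, (X n : MvPolynomial σ R) ^ d) ^ p) ≠ 0) :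
    ∃ β : σ → ℕ, ∑ n, β n = p ∧ ∀ n, μ n = d * β n := by
  rw [sum_pow_eq_sum_piAntidiag, coeff_sum] at h
  obtain ⟨β, hβ, hne⟩ := exists_ne_zero_of_sum_ne_zero h
  refine ⟨β, (mem_piAntidiag.1 hβ).1, fun n => ?_⟩
  have hprod : ∏ n, ((X n : MvPolynomial σ R) ^ d) ^ β n
      = monomial (Finsupp.equivFunOnFinite.symm fun n => d * β n) 1 := by
    rw [monomial_eq, C_1, one_mul, Finsupp.prod_fintype _ _ fun _ => pow_zero _]
    simp [pow_mul]
  rw [hprod, ← C_eq_coe_nat, coeff_C_mul, coeff_monomial] at hne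
  split_ifs at hne with hμ
  · simp [← hμ]
  · simp at hne

theorem Finset.le_of_sum_tsub_add_sum_eq {ι : Type*} {s : Finset ι} {a b : ι → ℕ}
    (h : ∑ n ∈ s, (a n - b n) + ∑ n ∈ s, b n = ∑ n ∈ s, a n) {n : ι} (hn : n ∈ s) :
    b n ≤ a n := by
  rw [← sum_add_distrib, eq_comm, sum_eq_sum_iff_of_le fun _ _ => le_tsub_add] at h
  exact tsub_add_cancel_iff_le.1 (h n hn).symm

theorem Finset.card_add_card_filter_two_le_le_sum {ι : Type*} {s : Finset ι} {f : ι → ℕ}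
    (hf : ∀ n ∈ s, 1 ≤ f n) : #s + #{n ∈ s | 2 ≤ f n} ≤ ∑ n ∈ s, f n := by
  rw [card_eq_sum_ones, card_filter, ← sum_add_distrib]
  refine sum_le_sum fun n hn => ?_
  have := hf n hn
  split_ifs <;> omega

theorem exists_eq_one_and_eq_one_of_sum_add_sum_lt {ι : Type*} [Fintype ι] {f g : ι → ℕ}
    (hf : ∀ n, 1 ≤ f n) (hg : ∀ n, 1 ≤ g n) (h : ∑ n, f n + ∑ n, g n < 3 * Fintype.card ι) :
    ∃ s, f s = 1 ∧ g s = 1 := by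
  classical
  by_contra! hfg
  have hcover : univ ⊆ univ.filter (2 ≤ f ·) ∪ univ.filter (2 ≤ g ·) := fun n _ => by
    have := hfg n
    have := hf n
    have := hg n
    simp only [mem_union, mem_filter, mem_univ, true_and]
    omega
  have hf₂ := card_add_card_filter_two_le_le_sum fun n (_ : n ∈ univ) => hf n
  have hg₂ := card_add_card_filter_two_le_le_sum fun n (_ : n ∈ univ) => hg n
  have := (card_le_card hcover).trans (card_union_le _ _)
  rw [card_univ] at *
  omega

open MvPolynomial in
theorem stmt4_general (N k d : ℕ) (hNk : 2 * (k - 1) ≤ N)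
    (hd : d = N + k) (i j : Fin (N + 1) → ℕ)
    (hi : ∀ n, 1 ≤ i n) (hj : ∀ n, 1 ≤ j n)
    (hsi : ∑ n, i n = d) (hsj : ∑ n, j n = d) (hij : i ≠ j)
    (m : ℕ) (hm : 1 ≤ m) :
    MvPolynomial.coeff (Finsupp.equivFunOnFinite.symm (fun n => m * j n - i n))
      ((∑ n : Fin (N + 1), (X n : MvPolynomial (Fin (N + 1)) ℤ) ^ d) ^ (m - 1)) = 0 := by
  by_contra h
  obtain ⟨β, hβsum, hβ⟩ := exists_eq_mul_of_coeff_sum_X_pow_pow_ne_zero h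
  simp only [Finsupp.coe_equivFunOnFinite_symm] at hβ
  have hle (n : Fin (N + 1)) : i n ≤ m * j n := by
    refine le_of_sum_tsub_add_sum_eq (a := fun n => m * j n) ?_ (mem_univ n)
    rw [sum_congr rfl fun n _ => hβ n, ← mul_sum, ← mul_sum, hβsum, hsi, hsj, ← mul_add_one, Nat.sub_add_cancel hm, mul_comm]
  obtain ⟨s, his, hjs⟩ := exists_eq_one_and_eq_one_of_sum_add_sum_lt hi hj
    (by rw [hsi, hsj, Fintype.card_fin]; omega)
  have hm1 : 1 ≡ m [MOD d] := (Nat.modEq_iff_dvd' hm).2 ⟨β s, by simpa [his, hjs] using hβ s⟩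
  refine hij (funext fun n => Nat.ModEq.eq_of_abs_lt (m := d) ?_ ?_)
  · calc i n ≡ i n + d * β n [MOD d] := Nat.left_modEq_add_iff.2 (dvd_mul_right _ _)
      _ = m * j n := by rw [← hβ n, Nat.add_sub_cancel' (hle n)]
      _ ≡ 1 * j n [MOD d] := hm1.symm.mul_right _
      _ = j n := one_mul _
  · have := hi n
    have := hj n
    have := single_le_sum (fun n _ => Nat.zero_le (i n)) (mem_univ n)
    have := single_le_sum (fun n _ => Nat.zero_le (j n)) (mem_univ n)
    rw [abs_lt]
    omega

open MvPolynomial in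
theorem stmt4 (N k d : ℕ) (hN : 1 ≤ N) (hk : 2 ≤ k) (hNk : 2 * (k - 1) ≤ N)
    (hd : d = N + k) (i j : Fin (N + 1) → ℕ)
    (hi : ∀ n, 1 ≤ i n) (hj : ∀ n, 1 ≤ j n)
    (hsi : ∑ n, i n = d) (hsj : ∑ n, j n = d) (hij : i ≠ j)
    (m : ℕ) (hm : 1 ≤ m) :
    MvPolynomial.coeff (Finsupp.equivFunOnFinite.symm (fun n => m * j n - i n))
      ((∑ n : Fin (N + 1), (X n : MvPolynomial (Fin (N + 1)) ℤ) ^ d) ^ (m - 1)) = 0 :=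
  stmt4_general N k d hNk hd i j hi hj hsi hsj hij m hm
end

section
/- Let N ≥ 1, d ≥ N + 2, and let i = (i_0,...,i_N), j = (j_0,...,j_N) be tuples of positive integers each summing to d. Suppose there is an index s with i_s = j_s = 1, and suppose integers β_0,...,β_N ≥ 0 satisfy d·β_n = m·j_n - i_n for all n, for some integer m ≥ 1. Then m ≡ 1 (mod d) and i = j. -/
theorem stmt16 (N d : ℕ) (hN : 1 ≤ N) (hd : N + 2 ≤ d)
    (i j : Fin (N + 1) → ℕ) (hi : ∀ n, 1 ≤ i n) (hj : ∀ n, 1 ≤ j n)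
    (hsi : ∑ n, i n = d) (hsj : ∑ n, j n = d)
    (s : Fin (N + 1)) (his : i s = 1) (hjs : j s = 1)
    (m : ℕ) (hm : 1 ≤ m) (β : Fin (N + 1) → ℕ)
    (hβ : ∀ n, (d : ℤ) * β n = m * j n - i n) :
    m ≡ 1 [MOD d] ∧ i = j := by
  have hdvd1 : (d : ℤ) ∣ (m : ℤ) - 1 := by
    refine ⟨β s, ?_⟩
    have := hβ s
    rw [his, hjs] at this
    push_cast at this ⊢
    linarith
  constructor
  · rw [Nat.modEq_iff_dvd]
    have h := (dvd_neg).mpr hdvd1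
    have : -((m:ℤ) - 1) = (1:ℤ) - m := by ring
    rw [this] at h
    exact_mod_cast h
  · funext n
    -- bounds: i n < d and j n < d
    have hb : ∀ (f : Fin (N + 1) → ℕ), (∀ t, 1 ≤ f t) → f s = 1 → (∑ t, f t = d) →
        f n < d := by
      intro f hf hfs hsum
      rcases eq_or_ne n s with rfl | hns
      · omega
      · have hsub : ({n, s} : Finset (Fin (N+1))) ⊆ Finset.univ := Finset.subset_univ _
        have := Finset.sum_le_sum_of_subset_of_nonneg hsub (fun t _ _ => Nat.zero_le (f t))
        rw [Finset.sum_pair hns, hsum] at this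
        have := hf s
        omega
    have hin : i n < d := hb i hi his hsi
    have hjn : j n < d := hb j hj hjs hsj
    have hdvd2 : (d : ℤ) ∣ (m : ℤ) * j n - i n := ⟨β n, (hβ n).symm⟩
    have hdvd3 : (d : ℤ) ∣ ((m : ℤ) - 1) * j n := hdvd1.mul_right _
    have hdvd4 : (d : ℤ) ∣ (j n : ℤ) - i n := by
      have : (j n : ℤ) - i n = ((m : ℤ) * j n - i n) - ((m : ℤ) - 1) * j n := by ring
      rw [this]; exact dvd_sub hdvd2 hdvd3
    have h0 : (j n : ℤ) - i n = 0 := by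
      apply Int.eq_zero_of_abs_lt_dvd hdvd4
      rw [abs_sub_lt_iff]
      constructor <;> push_cast <;> [skip; skip] <;> omega
    omega
end
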